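/- For every integer m ≥ 1, the complete graph K_{3m} satisfies ‖M_{K_{3m}}‖_2 := sup{ ‖M_{K_{3m}} f‖_2 / ‖f‖_2 : f ≠ 0 } = (4/3)^{1/2}. For n = 2, one has ‖M_{K_2}‖_2 = (3 + 5^{1/2})^{1/2} / 2. -/

import Mathlib

open scoped Classical

/-- The ball of radius `r` around `e` in the graph metric of `G`
(only vertices reachable from `e` are at finite distance). -/
noncomputable def gball {V : Type*} [Fintype V] (G : SimpleGraph V) (e : V) (r : ℕ) :
    Finset V :=
  Finset.univ.filter fun m => G.Reachable e m ∧ G.dist e m ≤ r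

/-- The centered Hardy–Littlewood maximal function on a finite graph. -/
noncomputable def mxHL {V : Type*} [Fintype V] (G : SimpleGraph V) (f : V → ℝ) (e : V) : ℝ :=
  ⨆ r : ℕ, (1 / ((gball G e r).card : ℝ)) * ∑ m ∈ gball G e r, |f m|

/-- The fractional centered Hardy–Littlewood maximal function on a finite graph. -/
noncomputable def mxFr {V : Type*} [Fintype V] (G : SimpleGraph V) (α : ℝ) (f : V → ℝ)
    (e : V) : ℝ :=
  ⨆ r : ℕ, ((gball G e r).card : ℝ) ^ (α - 1) * ∑ m ∈ gball G e r, |f m|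

/-- The `p`-variation of `f : V → ℝ` with respect to the graph `G`
(vertices at distance `1` are exactly the adjacent ones). -/
noncomputable def vp {V : Type*} [Fintype V] (G : SimpleGraph V) (p : ℝ) (f : V → ℝ) : ℝ :=
  ((1 / 2) * ∑ v : V, ∑ w : V, if G.Adj v w then |f v - f w| ^ p else 0) ^ (1 / p)

/-- The star graph on `Fin n`, with center the vertex with value `0`. -/
def starG (n : ℕ) : SimpleGraph (Fin n) where
  Adj v w := v ≠ w ∧ (v.val = 0 ∨ w.val = 0)
  symm := ⟨fun _ _ h => ⟨h.1.symm, h.2.symm⟩⟩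
  loopless := ⟨fun _ h => h.1 rfl⟩

/-- The `ℓ²` norm of a function on a finite vertex set. -/
noncomputable def nrm2 {V : Type*} [Fintype V] (g : V → ℝ) : ℝ :=
  Real.sqrt (∑ v : V, g v ^ 2)

/-! On the complete graph every ball of positive radius is the whole vertex set, so
`M f e = max |f e| A` with `A` the mean of `|f|`. Pointwise
`max x A ^ 2 ≤ 4/3 * x ^ 2 + 4/3 * A * (A - x)`, and the correction terms sum to zero over the
vertices because `A` is the mean, whence `‖M f‖₂ ^ 2 ≤ 4/3 ‖f‖₂ ^ 2`. Equality holds pointwise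
exactly at `x = 2A` and `x = A/2`; these two values average to `A` only when a third of the
vertices carry the larger one, as for the function equal to `4` on a third of `K_{3m}` and to
`1` elsewhere. On `K_2` the same reduction leaves a quadratic form in two variables. -/

lemma max_sq_le_four_thirds (x a : ℝ) :
    max x a ^ 2 ≤ 4 / 3 * x ^ 2 + 4 / 3 * a * (a - x) := by
  rcases le_total a x with h | h
  · rw [max_eq_left h]; nlinarith [sq_nonneg (x - 2 * a)]
  · rw [max_eq_right h]; nlinarith [sq_nonneg (2 * x - a)]

-- `(3 + √5) / 4` is the top eigenvalue of the quadratic form `x ^ 2 + ((x + y) / 2) ^ 2`: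
-- the gap is `(√5 - 2) / 4 * (x - (√5 + 2) * y) ^ 2`.
lemma max_mean_sq_add_max_mean_sq_le (x y : ℝ) :
    max x ((x + y) / 2) ^ 2 + max y ((x + y) / 2) ^ 2 ≤ (3 + √5) / 4 * (x ^ 2 + y ^ 2) := by
  wlog h : y ≤ x generalizing x y
  · have := this y x (le_of_not_ge h)
    rw [add_comm y x] at this
    linarith
  rw [max_eq_left (by linarith), max_eq_right (by linarith)]
  have h5 : √5 ^ 2 = 5 := Real.sq_sqrt (by norm_num)
  have h2 : 2 ≤ √5 := Real.le_sqrt_of_sq_le (by norm_num)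
  nlinarith [mul_nonneg (sub_nonneg.2 h2) (sq_nonneg (x - (√5 + 2) * y))]

section CompleteGraph

variable {V : Type*} [Fintype V]

lemma gball_zero (G : SimpleGraph V) (e : V) : gball G e 0 = {e} := by
  ext m
  simp only [gball, Finset.mem_filter, Finset.mem_univ, true_and, Finset.mem_singleton,
    Nat.le_zero, SimpleGraph.dist_eq_zero_iff_eq_or_not_reachable]
  constructor
  · rintro ⟨hr, rfl | hnr⟩
    · rfl
    · exact absurd hr hnr
  · rintro rfl
    exact ⟨.rfl, .inl rfl⟩

lemma gball_top_of_pos (e : V) {r : ℕ} (hr : 0 < r) : gball ⊤ e r = Finset.univ := by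
  ext m
  simp only [gball, Finset.mem_filter, Finset.mem_univ, true_and, iff_true,
    SimpleGraph.reachable_top, SimpleGraph.dist_top]
  split_ifs <;> omega

lemma mxHL_top_apply (f : V → ℝ) (e : V) :
    mxHL ⊤ f e = max |f e| ((∑ m, |f m|) / Fintype.card V) := by
  have hval : ∀ r : ℕ, (1 / ((gball ⊤ e r).card : ℝ)) * ∑ m ∈ gball ⊤ e r, |f m|
      = if r = 0 then |f e| else (∑ m, |f m|) / Fintype.card V := fun r => by
    split_ifs with h
    · simp [h, gball_zero]
    · rw [gball_top_of_pos e (Nat.pos_of_ne_zero h), Finset.card_univ, one_div_mul_eq_div]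
  simp only [mxHL, hval]
  have hle : ∀ r : ℕ, (if r = 0 then |f e| else (∑ m, |f m|) / Fintype.card V)
      ≤ max |f e| ((∑ m, |f m|) / Fintype.card V) := fun r => by
    split_ifs
    exacts [le_max_left _ _, le_max_right _ _]
  have hbdd := (⟨_, Set.forall_mem_range.2 hle⟩ : BddAbove (Set.range _))
  refine le_antisymm (ciSup_le hle) (max_le ?_ ?_)
  · simpa using le_ciSup hbdd 0
  · simpa using le_ciSup hbdd 1

lemma sum_max_mean_sq_le (x : V → ℝ) :
    ∑ e, max (x e) ((∑ m, x m) / Fintype.card V) ^ 2 ≤ 4 / 3 * ∑ e, x e ^ 2 := by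
  set a := (∑ m, x m) / Fintype.card V
  have hbalance : ∑ e, a * (a - x e) = 0 := by
    rcases isEmpty_or_nonempty V with hV | hV
    · simp
    rw [← Finset.mul_sum, Finset.sum_sub_distrib, Finset.sum_const, Finset.card_univ,
      nsmul_eq_mul, mul_div_cancel₀ _ (by positivity), sub_self, mul_zero]
  calc ∑ e, max (x e) a ^ 2 ≤ ∑ e, (4 / 3 * x e ^ 2 + 4 / 3 * (a * (a - x e))) :=
        Finset.sum_le_sum fun e _ => by rw [← mul_assoc]; exact max_sq_le_four_thirds _ _
    _ = 4 / 3 * ∑ e, x e ^ 2 := by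
        rw [Finset.sum_add_distrib, ← Finset.mul_sum, ← Finset.mul_sum, hbalance, mul_zero,
          add_zero]

lemma sum_sq_mxHL_top_le (f : V → ℝ) :
    ∑ e, mxHL ⊤ f e ^ 2 ≤ 4 / 3 * ∑ e, f e ^ 2 := by
  simp only [mxHL_top_apply]
  simpa only [sq_abs] using sum_max_mean_sq_le fun e => |f e|

lemma sum_ite_mem_univ (S : Finset V) (c d : ℝ) :
    ∑ e, (if e ∈ S then c else d) = S.card * c + Sᶜ.card * d := by
  rw [Finset.sum_ite, Finset.sum_const, Finset.sum_const]
  simp [Finset.compl_eq_univ_sdiff, Finset.filter_not]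

lemma sum_sq_mxHL_top_ite_mem [Nonempty V] {S : Finset V} (hS : 3 * S.card = Fintype.card V) :
    ∑ e, mxHL ⊤ (fun e => if e ∈ S then 4 else 1) e ^ 2
      = 4 / 3 * ∑ e, (if e ∈ S then (4 : ℝ) else 1) ^ 2 := by
  have hcompl : (Sᶜ.card : ℝ) = 2 * S.card := by
    rw [Finset.card_compl]; norm_cast; omega
  have hk : (S.card : ℝ) ≠ 0 := by
    have := Fintype.card_pos (α := V); norm_cast; omega
  have habs : ∀ e, |if e ∈ S then (4 : ℝ) else 1| = if e ∈ S then 4 else 1 := fun e =>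
    abs_of_nonneg (by split_ifs <;> norm_num)
  have hmean : (∑ e, (if e ∈ S then (4 : ℝ) else 1)) / Fintype.card V = 2 := by
    rw [sum_ite_mem_univ, hcompl, ← hS]; push_cast; field_simp; ring
  have hmax : ∀ e, max (if e ∈ S then (4 : ℝ) else 1) 2 ^ 2 = if e ∈ S then 16 else 4 :=
    fun e => by split_ifs <;> norm_num
  have hsq : ∀ e, (if e ∈ S then (4 : ℝ) else 1) ^ 2 = if e ∈ S then 16 else 1 :=
    fun e => by split_ifs <;> norm_num
  simp only [mxHL_top_apply, habs, hmean, hmax]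
  simp only [hsq, sum_ite_mem_univ, hcompl]
  ring

lemma sSup_nrm2_div_eq_sqrt {W : Type*} [Fintype W] (T : (V → ℝ) → W → ℝ) {c : ℝ}
    (hle : ∀ f, ∑ w, T f w ^ 2 ≤ c * ∑ v, f v ^ 2) {g : V → ℝ} (hg : g ≠ 0)
    (heq : ∑ w, T g w ^ 2 = c * ∑ v, g v ^ 2) :
    sSup {r | ∃ f : V → ℝ, f ≠ 0 ∧ r = nrm2 (T f) / nrm2 f} = √c := by
  have hpos : ∀ f : V → ℝ, f ≠ 0 → 0 < nrm2 f := fun f hf => by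
    obtain ⟨v, hv⟩ := Function.ne_iff.mp hf
    exact Real.sqrt_pos.2 <|
      Finset.sum_pos' (fun _ _ => sq_nonneg _) ⟨v, Finset.mem_univ v, sq_pos_of_ne_zero hv⟩
  refine IsGreatest.csSup_eq ⟨⟨g, hg, ?_⟩, ?_⟩
  · rw [nrm2, heq, Real.sqrt_mul' _ (Finset.sum_nonneg fun _ _ => sq_nonneg _), ← nrm2,
      mul_div_cancel_right₀ _ (hpos g hg).ne']
  · rintro r ⟨f, hf, rfl⟩
    rw [div_le_iff₀ (hpos f hf), nrm2, nrm2,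
      ← Real.sqrt_mul' _ (Finset.sum_nonneg fun _ _ => sq_nonneg _)]
    exact Real.sqrt_le_sqrt (hle f)

end CompleteGraph

lemma sum_sq_mxHL_top_fin_two_le (f : Fin 2 → ℝ) :
    ∑ e, mxHL ⊤ f e ^ 2 ≤ (3 + √5) / 4 * ∑ e, f e ^ 2 := by
  simp only [Fin.sum_univ_two, mxHL_top_apply, Fintype.card_fin, Nat.cast_ofNat]
  simpa only [sq_abs] using max_mean_sq_add_max_mean_sq_le |f 0| |f 1|

lemma sum_sq_mxHL_top_fin_two_eq :
    ∑ e, mxHL ⊤ ![2 + √5, 1] e ^ 2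
      = (3 + √5) / 4 * ∑ e, (![2 + √5, 1] : Fin 2 → ℝ) e ^ 2 := by
  have h5 : √5 ^ 2 = 5 := Real.sq_sqrt (by norm_num)
  have h0 : 0 ≤ √5 := Real.sqrt_nonneg 5
  simp only [Fin.sum_univ_two, mxHL_top_apply, Fintype.card_fin, Matrix.cons_val_zero,
    Matrix.cons_val_one, abs_one, abs_of_nonneg (by positivity : (0 : ℝ) ≤ 2 + √5)]
  rw [max_eq_left (by linarith), max_eq_right (by linarith)]
  linear_combination (-(2 + √5) / 4) * h5

/-- `‖M_{K_{3m}}‖₂ = (4/3)^(1/2)` for every `m ≥ 1`, and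
`‖M_{K_2}‖₂ = (3 + √5)^(1/2) / 2`. -/
theorem completeGraph_l2_norm_multiple_of_three :
    (∀ m : ℕ, 1 ≤ m →
      sSup {c : ℝ | ∃ f : Fin (3 * m) → ℝ, f ≠ 0 ∧
          c = nrm2 (mxHL (⊤ : SimpleGraph (Fin (3 * m))) f) / nrm2 f} =
        Real.sqrt (4 / 3)) ∧
    sSup {c : ℝ | ∃ f : Fin 2 → ℝ, f ≠ 0 ∧
        c = nrm2 (mxHL (⊤ : SimpleGraph (Fin 2)) f) / nrm2 f} =
      Real.sqrt (3 + Real.sqrt 5) / 2 := by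
  refine ⟨fun m hm => ?_, ?_⟩
  · have : Nonempty (Fin (3 * m)) := ⟨⟨0, by omega⟩⟩
    have hS : 3 * (Finset.univ.filter fun e : Fin (3 * m) => e.val < m).card
        = Fintype.card (Fin (3 * m)) := by
      rw [Fin.card_filter_val_lt, Fintype.card_fin]; omega
    refine sSup_nrm2_div_eq_sqrt _ sum_sq_mxHL_top_le ?_ (sum_sq_mxHL_top_ite_mem hS)
    exact Function.ne_iff.2 ⟨Classical.arbitrary _, by split_ifs <;> norm_num⟩
  · have hg : (![2 + √5, 1] : Fin 2 → ℝ) ≠ 0 := Function.ne_iff.2 ⟨1, by simp⟩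
    rw [sSup_nrm2_div_eq_sqrt _ sum_sq_mxHL_top_fin_two_le hg sum_sq_mxHL_top_fin_two_eq,
      Real.sqrt_div' _ (by norm_num : (0 : ℝ) ≤ 4), show (4 : ℝ) = 2 ^ 2 by norm_num,
      Real.sqrt_sq zero_le_two]
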